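/- For every p in (0,1], for all real x, y with |x-y| \le 1/2 and every natural number n, |S_p(x) - S_p(y)| \le n |x - y|^p + 1/(2^{pn}(2^p - 1)). -/
import Mathlib


open Real

noncomputable def T0 (x : ℝ) : ℝ := |x - round x|

noncomputable def S (p x : ℝ) : ℝ := ∑' n : ℕ, (T0 (2 ^ n * x) / 2 ^ n) ^ p

lemma T0_nonneg (x : ℝ) : 0 ≤ T0 x := abs_nonneg _

lemma T0_le_half (x : ℝ) : T0 x ≤ 1 / 2 := abs_sub_round x

lemma T0_sub_le (u v : ℝ) : T0 u - T0 v ≤ |u - v| := by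
  have h1 : |u - round u| ≤ |u - (round v : ℤ)| := round_le u (round v)
  have h2 : |u - (round v : ℝ)| ≤ |u - v| + |v - round v| := by
    calc |u - (round v : ℝ)| = |(u - v) + (v - round v)| := by ring_nf
    _ ≤ |u - v| + |v - round v| := abs_add_le _ _
  unfold T0
  push_cast at h1
  linarith

lemma T0_lip (u v : ℝ) : |T0 u - T0 v| ≤ |u - v| := by
  rw [abs_sub_le_iff]
  refine ⟨T0_sub_le u v, ?_⟩
  rw [abs_sub_comm]
  exact T0_sub_le v u

lemma abs_rpow_sub_rpow_le {p : ℝ} (hp0 : 0 ≤ p) (hp1 : p ≤ 1) {a b : ℝ}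
    (ha : 0 ≤ a) (hb : 0 ≤ b) : |a ^ p - b ^ p| ≤ |a - b| ^ p := by
  wlog hab : b ≤ a generalizing a b
  · have := this hb ha (le_of_not_ge hab)
    rwa [abs_sub_comm, abs_sub_comm b a] at this
  rw [abs_of_nonneg (by linarith : (0:ℝ) ≤ a - b),
    abs_of_nonneg (sub_nonneg.2 (Real.rpow_le_rpow hb hab hp0)), sub_le_iff_le_add]
  have key := NNReal.rpow_add_le_add_rpow (Real.toNNReal (a - b)) (Real.toNNReal b) hp0 hp1
  have hab' : Real.toNNReal (a - b) + Real.toNNReal b = Real.toNNReal a := by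
    rw [← Real.toNNReal_add (by linarith) hb, sub_add_cancel]
  rw [hab'] at key
  have := (NNReal.coe_le_coe.2 key)
  push_cast [NNReal.coe_rpow, Real.coe_toNNReal _ ha, Real.coe_toNNReal _ hb,
    Real.coe_toNNReal _ (by linarith : (0:ℝ) ≤ a - b)] at this
  exact this

set_option maxHeartbeats 1000000 in
theorem stmt_10 (p : ℝ) (hp0 : 0 < p) (hp1 : p ≤ 1) (x y : ℝ) (hxy : |x - y| ≤ 1 / 2)
    (n : ℕ) :
    |S p x - S p y| ≤ n * |x - y| ^ p + 1 / (2 ^ (p * n) * (2 ^ p - 1)) := by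
  set r : ℝ := (1 / 2 : ℝ) ^ p with hr
  have hr0 : 0 ≤ r := Real.rpow_nonneg (by norm_num) p
  have hr1 : r < 1 := Real.rpow_lt_one (by norm_num) (by norm_num) hp0
  set F : ℝ → ℕ → ℝ := fun z m => (T0 (2 ^ m * z) / 2 ^ m) ^ p with hF
  have hpow2 : ∀ m : ℕ, (0:ℝ) < 2 ^ m := fun m => by positivity
  have hF0 : ∀ z m, 0 ≤ F z m := fun z m =>
    Real.rpow_nonneg (div_nonneg (T0_nonneg _) (hpow2 m).le) p
  have hhalfpow : ∀ m : ℕ, ((1/2 : ℝ) ^ (m+1)) ^ p = r ^ (m+1) := by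
    intro m
    rw [← Real.rpow_natCast (1/2 : ℝ) (m+1), ← Real.rpow_mul (by norm_num),
      mul_comm, Real.rpow_mul (by norm_num), Real.rpow_natCast]
  have hFle : ∀ z m, F z m ≤ r ^ (m+1) := by
    intro z m
    rw [← hhalfpow m]
    apply Real.rpow_le_rpow (div_nonneg (T0_nonneg _) (hpow2 m).le) _ hp0.le
    rw [div_le_iff₀ (hpow2 m), pow_succ, one_div, inv_pow]
    calc T0 (2 ^ m * z) ≤ 1/2 := T0_le_half _
    _ = ((2:ℝ)^m)⁻¹ * 2^m * (1/2) := by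
        field_simp
    _ = ((2:ℝ)^m)⁻¹ ^ 1 * 2 ^ m / 2 := by ring
    _ ≤ _ := by
        rw [pow_one]; ring_nf; rfl
  have hgeom : Summable (fun m : ℕ => r ^ (m+1)) := by
    simpa [pow_succ] using (summable_geometric_of_lt_one hr0 hr1).mul_right r
  have hSumF : ∀ z, Summable (F z) := fun z =>
    Summable.of_nonneg_of_le (hF0 z) (hFle z) hgeom
  -- difference bounds
  have hdiff_lip : ∀ m, |F x m - F y m| ≤ |x - y| ^ p := by
    intro m
    have h1 : |F x m - F y m| ≤ |T0 (2 ^ m * x) / 2 ^ m - T0 (2 ^ m * y) / 2 ^ m| ^ p :=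
      abs_rpow_sub_rpow_le hp0.le hp1 (div_nonneg (T0_nonneg _) (hpow2 m).le)
        (div_nonneg (T0_nonneg _) (hpow2 m).le)
    have h2 : |T0 (2 ^ m * x) / 2 ^ m - T0 (2 ^ m * y) / 2 ^ m| ≤ |x - y| := by
      rw [div_sub_div_same, abs_div, abs_of_pos (hpow2 m), div_le_iff₀ (hpow2 m)]
      calc |T0 (2 ^ m * x) - T0 (2 ^ m * y)| ≤ |2 ^ m * x - 2 ^ m * y| := T0_lip _ _
      _ = |x - y| * 2 ^ m := by
          rw [← mul_sub, abs_mul, abs_of_pos (hpow2 m), mul_comm]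
    exact h1.trans (Real.rpow_le_rpow (abs_nonneg _) h2 hp0.le)
  have hdiff_tail : ∀ m, |F x m - F y m| ≤ r ^ (m+1) := by
    intro m
    rw [abs_sub_le_iff]
    constructor <;> nlinarith [hFle x m, hFle y m, hF0 x m, hF0 y m]
  have hsumdiff : Summable (fun m => |F x m - F y m|) :=
    Summable.of_nonneg_of_le (fun m => abs_nonneg _) hdiff_tail hgeom
  -- main bound
  have hSx : S p x = ∑' m, F x m := rfl
  have hSy : S p y = ∑' m, F y m := rfl
  have hmain : |S p x - S p y| ≤ ∑' m, |F x m - F y m| := by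
    rw [hSx, hSy, ← Summable.tsum_sub (hSumF x) (hSumF y)]
    have h2 : Summable (fun m => ‖F x m - F y m‖) := by
      simpa only [Real.norm_eq_abs] using hsumdiff
    have h3 := norm_tsum_le_tsum_norm h2
    simpa only [Real.norm_eq_abs] using h3
  have hsplit := Summable.sum_add_tsum_nat_add (f := fun m => |F x m - F y m|) n hsumdiff
  have hhead : ∑ m ∈ Finset.range n, |F x m - F y m| ≤ n * |x - y| ^ p := by
    calc ∑ m ∈ Finset.range n, |F x m - F y m| ≤ ∑ _m ∈ Finset.range n, |x - y| ^ p :=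
      Finset.sum_le_sum fun m _ => hdiff_lip m
    _ = n * |x - y| ^ p := by simp [mul_comm]
  have htailsum : ∑' m, |F x (m + n) - F y (m + n)| ≤ r ^ (n+1) * (1 - r)⁻¹ := by
    have hs2 : Summable (fun m : ℕ => r ^ (n+1) * r ^ m) :=
      (summable_geometric_of_lt_one hr0 hr1).mul_left _
    calc ∑' m, |F x (m + n) - F y (m + n)| ≤ ∑' m : ℕ, r ^ (n+1) * r ^ m := by
          apply Summable.tsum_le_tsum _ ((summable_nat_add_iff (f := fun m => |F x m - F y m|) n).2 hsumdiff) hs2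
          intro m
          calc |F x (m + n) - F y (m + n)| ≤ r ^ (m + n + 1) := hdiff_tail _
          _ = r ^ (n+1) * r ^ m := by ring
    _ = r ^ (n+1) * (1 - r)⁻¹ := by
          rw [tsum_mul_left, tsum_geometric_of_lt_one hr0 hr1]
  -- identify the closed form
  have hA1 : (1:ℝ) < 2 ^ p :=
    (Real.one_lt_rpow_iff_of_pos (by norm_num)).2 (Or.inl ⟨by norm_num, hp0⟩)
  have hA0 : (0:ℝ) < 2 ^ p := lt_trans one_pos hA1
  have hrA : r = ((2:ℝ) ^ p)⁻¹ := by
    rw [hr, one_div, Real.inv_rpow (by norm_num)]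
  have hApow : ((2:ℝ) ^ p) ^ n = 2 ^ (p * n) :=
    (Real.rpow_mul_natCast (by norm_num) p n).symm
  have key : ∀ A : ℝ, 1 < A → (A⁻¹) ^ (n+1) * (1 - A⁻¹)⁻¹ = 1 / (A ^ n * (A - 1)) := by
    intro A hA
    have h0 : (0:ℝ) < A := by linarith
    have h2 : (0:ℝ) < A - 1 := by linarith
    have h0' : A ≠ 0 := ne_of_gt h0
    have h2' : A - 1 ≠ 0 := ne_of_gt h2
    rw [eq_div_iff (by positivity)]
    have h3 : (1 - A⁻¹) = (A - 1) / A := by field_simp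
    rw [h3, inv_div, inv_pow, pow_succ, mul_inv]
    field_simp
  have hclosed : r ^ (n+1) * (1 - r)⁻¹ = 1 / (2 ^ (p * n) * (2 ^ p - 1)) := by
    rw [hrA, ← hApow]
    exact key _ hA1
  calc |S p x - S p y| ≤ ∑' m, |F x m - F y m| := hmain
  _ = ∑ m ∈ Finset.range n, |F x m - F y m| + ∑' m, |F x (m + n) - F y (m + n)| := hsplit.symm
  _ ≤ n * |x - y| ^ p + r ^ (n+1) * (1 - r)⁻¹ := add_le_add hhead htailsum
  _ = n * |x - y| ^ p + 1 / (2 ^ (p * n) * (2 ^ p - 1)) := by rw [hclosed]
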